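/- arXiv:2111.07115 — 3 statements merged into one kernel-verified Lean document; each statement's English description precedes it below -/
import Mathlib

section
/- For the Euclidean norm on ℝ^2, the critical radius equals (4/3)^{1/4}; that is, every unimodular lattice in ℝ^2 contains a nonzero vector of Euclidean norm at most (4/3)^{1/4}, and the bound is attained by some unimodular lattice. -/
/-!
Hermite's argument. A shortest nonzero vector `x` of a unimodular lattice is primitive, so it
extends to a basis `x, y`; replacing `y` by `y + k x` for a suitable integer `k` makes
`|⟪x, y⟫| ≤ ‖x‖² / 2`. Since the basis has determinant `1`, Lagrange's identity gives
`‖x‖² ‖y‖² = ⟪x, y⟫² + 1 ≤ ‖x‖⁴ / 4 + 1`, and `‖x‖ ≤ ‖y‖` yields `‖x‖⁴ ≤ 4 / 3`.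
Conversely the hexagonal lattice of covolume `1` has squared norm form `c² (p² + p q + q²)`
with `c⁴ = 4 / 3`, and this form is at least `c²` on nonzero integer vectors.
-/

def IsUnimodularLattice (d : ℕ) (Λ : Set (Fin d → ℝ)) : Prop :=
  ∃ g : Matrix (Fin d) (Fin d) ℝ, g.det = 1 ∧
    Λ = {x | ∃ v : Fin d → ℤ, x = g.mulVec (fun i => (v i : ℝ))}

/-- The Euclidean norm on ℝ². -/
noncomputable def eucNorm2 (x : Fin 2 → ℝ) : ℝ := Real.sqrt (x 0 ^ 2 + x 1 ^ 2)

open Matrix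

section Wedge

variable {R : Type*} [CommRing R]

def wedge2 (x y : Fin 2 → R) : R := x 0 * y 1 - x 1 * y 0

theorem wedge2_mulVec (g : Matrix (Fin 2) (Fin 2) R) (x y : Fin 2 → R) :
    wedge2 (g *ᵥ x) (g *ᵥ y) = g.det * wedge2 x y := by
  simp only [wedge2, mulVec, dotProduct, Fin.sum_univ_two, det_fin_two]
  ring

theorem dotProduct_self_mul_dotProduct_self (x y : Fin 2 → R) :
    (x ⬝ᵥ x) * (y ⬝ᵥ y) = (x ⬝ᵥ y) ^ 2 + wedge2 x y ^ 2 := by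
  simp only [wedge2, dotProduct, Fin.sum_univ_two]
  ring

end Wedge

theorem dotProduct_self_pos {n : Type*} [Fintype n] {x : n → ℝ} (hx : x ≠ 0) : 0 < x ⬝ᵥ x := by
  simpa using dotProduct_self_star_pos_iff.mpr hx

theorem sq_dotProduct_self_le_of_reduced {x y : Fin 2 → ℝ} (hxy : wedge2 x y = 1)
    (hle : x ⬝ᵥ x ≤ y ⬝ᵥ y) (hred : |x ⬝ᵥ y| ≤ x ⬝ᵥ x / 2) : (x ⬝ᵥ x) ^ 2 ≤ 4 / 3 := by
  have hlagrange := dotProduct_self_mul_dotProduct_self x y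
  rw [hxy] at hlagrange
  have hx : 0 ≤ x ⬝ᵥ x := by simpa using dotProduct_self_star_nonneg x
  have hsq : (x ⬝ᵥ y) ^ 2 ≤ (x ⬝ᵥ x / 2) ^ 2 := sq_le_sq' (abs_le.mp hred).1 (abs_le.mp hred).2
  nlinarith [mul_le_mul_of_nonneg_left hle hx]

theorem exists_int_abs_add_mul_le (t : ℝ) {m : ℝ} (hm : 0 < m) :
    ∃ k : ℤ, |t + k * m| ≤ m / 2 := by
  refine ⟨-round (t / m), ?_⟩
  have h : t + ((-round (t / m) : ℤ) : ℝ) * m = (t / m - round (t / m)) * m := by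
    push_cast; field_simp; ring
  rw [h, abs_mul, abs_of_pos hm]
  nlinarith [abs_sub_round (t / m)]

theorem one_le_sq_add_mul_add_sq {p q : ℤ} (h : p ≠ 0 ∨ q ≠ 0) : 1 ≤ p ^ 2 + p * q + q ^ 2 := by
  rcases eq_or_ne q 0 with rfl | hq
  · have hp : p ≠ 0 := by simpa using h
    have : 0 < p ^ 2 := by positivity
    nlinarith
  · have : 0 < q ^ 2 := by positivity
    nlinarith [sq_nonneg (2 * p + q)]

section Lattice

variable (g : Matrix (Fin 2) (Fin 2) ℝ)

def latticeVec (v : Fin 2 → ℤ) : Fin 2 → ℝ := g *ᵥ fun i => (v i : ℝ)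

theorem latticeVec_add (v w : Fin 2 → ℤ) :
    latticeVec g (v + w) = latticeVec g v + latticeVec g w := by
  rw [latticeVec, latticeVec, latticeVec, ← mulVec_add]
  congr 1; ext i; simp

theorem latticeVec_smul (k : ℤ) (v : Fin 2 → ℤ) :
    latticeVec g (k • v) = (k : ℝ) • latticeVec g v := by
  rw [latticeVec, latticeVec, ← mulVec_smul]
  congr 1; ext i; simp

theorem latticeVec_ne_zero (hg : g.det ≠ 0) {v : Fin 2 → ℤ} (hv : v ≠ 0) :
    latticeVec g v ≠ 0 := by
  have hinj := mulVec_injective_iff_isUnit.mpr ((isUnit_iff_isUnit_det g).mpr hg.isUnit)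
  intro h
  refine hv (funext fun i => ?_)
  simpa using congrFun (hinj (h.trans (mulVec_zero g).symm)) i

theorem sq_det_mul_apply_le (u : Fin 2 → ℝ) (i : Fin 2) :
    (g.det * u i) ^ 2 ≤ (∑ j, ∑ k, g j k ^ 2) * ((g *ᵥ u) ⬝ᵥ (g *ᵥ u)) := by
  set x := g *ᵥ u
  have hx0 : x 0 = g 0 0 * u 0 + g 0 1 * u 1 := by simp [x]
  have hx1 : x 1 = g 1 0 * u 0 + g 1 1 * u 1 := by simp [x]
  have hdot : x ⬝ᵥ x = x 0 ^ 2 + x 1 ^ 2 := by simp [dotProduct, Fin.sum_univ_two, sq]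
  have hC : ∑ j, ∑ k, g j k ^ 2 = g 0 0 ^ 2 + g 0 1 ^ 2 + g 1 0 ^ 2 + g 1 1 ^ 2 := by
    simp only [Fin.sum_univ_two]; ring
  have cauchy_schwarz (a b : ℝ) : (a * x 0 + b * x 1) ^ 2 ≤ (a ^ 2 + b ^ 2) * (x ⬝ᵥ x) := by
    rw [hdot]; nlinarith [sq_nonneg (a * x 1 - b * x 0)]
  have hx : 0 ≤ x ⬝ᵥ x := by rw [hdot]; positivity
  -- `det g • u = adjugate g *ᵥ x`: apply Cauchy–Schwarz to a row of the adjugate.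
  fin_cases i
  · calc (g.det * u 0) ^ 2 = (g 1 1 * x 0 + -g 0 1 * x 1) ^ 2 := by
          rw [hx0, hx1, det_fin_two]; ring
      _ ≤ (g 1 1 ^ 2 + (-g 0 1) ^ 2) * (x ⬝ᵥ x) := cauchy_schwarz _ _
      _ ≤ _ := mul_le_mul_of_nonneg_right
          (by rw [hC]; nlinarith [sq_nonneg (g 0 0), sq_nonneg (g 1 0)]) hx
  · calc (g.det * u 1) ^ 2 = (-g 1 0 * x 0 + g 0 0 * x 1) ^ 2 := by
          rw [hx0, hx1, det_fin_two]; ring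
      _ ≤ ((-g 1 0) ^ 2 + g 0 0 ^ 2) * (x ⬝ᵥ x) := cauchy_schwarz _ _
      _ ≤ _ := mul_le_mul_of_nonneg_right
          (by rw [hC]; nlinarith [sq_nonneg (g 0 1), sq_nonneg (g 1 1)]) hx

theorem finite_setOf_latticeVec_dotProduct_self_le (hg : g.det ≠ 0) (r : ℝ) :
    {v : Fin 2 → ℤ | latticeVec g v ⬝ᵥ latticeVec g v ≤ r}.Finite := by
  set N : ℤ := ⌈(∑ j, ∑ k, g j k ^ 2) * r / g.det ^ 2⌉
  refine (Set.Finite.pi fun _ => Set.finite_Icc (-N) N).subset fun v hv i => ?_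
  have hsq : v i ^ 2 ≤ N := by
    have hdet : 0 < g.det ^ 2 := by positivity
    have hC : 0 ≤ ∑ j, ∑ k, g j k ^ 2 := by positivity
    have h := (sq_det_mul_apply_le g (fun i => (v i : ℝ)) i).trans
      (mul_le_mul_of_nonneg_left hv hC)
    rw [mul_pow, mul_comm, ← le_div_iff₀ hdet] at h
    exact_mod_cast h.trans (Int.le_ceil _)
  have habs := (Int.natCast_natAbs (v i)).symm ▸ (Int.natAbs_le_self_sq (v i)).trans hsq
  exact fun _ => abs_le.mp habs

def IsMinimalVector (v : Fin 2 → ℤ) : Prop :=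
  v ≠ 0 ∧ ∀ w ≠ 0, latticeVec g v ⬝ᵥ latticeVec g v ≤ latticeVec g w ⬝ᵥ latticeVec g w

theorem exists_isMinimalVector (hg : g.det ≠ 0) : ∃ v, IsMinimalVector g v := by
  set e : Fin 2 → ℤ := Pi.single 0 1
  have he : e ≠ 0 := by simp [e]
  obtain ⟨v, ⟨hv, hve⟩, hmin⟩ := Set.exists_min_image
    ({v | v ≠ 0} ∩ {v | latticeVec g v ⬝ᵥ latticeVec g v ≤ latticeVec g e ⬝ᵥ latticeVec g e})
    (fun v => latticeVec g v ⬝ᵥ latticeVec g v)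
    ((finite_setOf_latticeVec_dotProduct_self_le g hg _).subset Set.inter_subset_right)
    ⟨e, he, le_refl (latticeVec g e ⬝ᵥ latticeVec g e)⟩
  refine ⟨v, hv, fun w hw => ?_⟩
  by_cases hwe : latticeVec g w ⬝ᵥ latticeVec g w ≤ latticeVec g e ⬝ᵥ latticeVec g e
  · exact hmin w ⟨hw, hwe⟩
  · exact hve.trans (le_of_not_ge hwe)

theorem IsMinimalVector.isCoprime (hg : g.det ≠ 0) {v : Fin 2 → ℤ} (hv : IsMinimalVector g v) :
    IsCoprime (v 0) (v 1) := by
  obtain ⟨hv0, hmin⟩ := hv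
  set e : ℕ := Int.gcd (v 0) (v 1)
  obtain ⟨p, hp⟩ := Int.gcd_dvd_left (v 0) (v 1)
  obtain ⟨q, hq⟩ := Int.gcd_dvd_right (v 0) (v 1)
  have hv_eq : v = (e : ℤ) • ![p, q] := by
    ext i; fin_cases i; exacts [hp, hq]
  have hpq : ![p, q] ≠ 0 := by
    rintro h; rw [h, smul_zero] at hv_eq; exact hv0 hv_eq
  have hpos := dotProduct_self_pos (latticeVec_ne_zero g hg hpq)
  have hle := hmin _ hpq
  rw [hv_eq, latticeVec_smul, smul_dotProduct, dotProduct_smul, smul_eq_mul, smul_eq_mul,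
    ← mul_assoc] at hle
  have he : (e : ℝ) * e ≤ 1 := le_of_mul_le_mul_right (by rwa [one_mul]) hpos
  have he1 : e ≤ 1 := by
    have : e * e ≤ 1 := by exact_mod_cast he
    nlinarith
  have he0 : e ≠ 0 := by
    rintro h; rw [h, Nat.cast_zero, zero_smul] at hv_eq; exact hv0 hv_eq
  exact Int.isCoprime_iff_gcd_eq_one.mpr (by omega)

theorem IsMinimalVector.sq_dotProduct_self_le (hg : g.det = 1) {v : Fin 2 → ℤ}
    (hv : IsMinimalVector g v) : (latticeVec g v ⬝ᵥ latticeVec g v) ^ 2 ≤ 4 / 3 := by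
  obtain ⟨a, b, hab⟩ := hv.isCoprime g (by simp [hg])
  obtain ⟨k, hk⟩ := exists_int_abs_add_mul_le (latticeVec g v ⬝ᵥ latticeVec g ![-b, a])
    (dotProduct_self_pos (latticeVec_ne_zero g (by simp [hg]) hv.1))
  set w : Fin 2 → ℤ := ![-b, a] + k • v
  have hwedge : wedge2 (latticeVec g v) (latticeVec g w) = 1 := by
    rw [latticeVec, latticeVec, wedge2_mulVec, hg, one_mul]
    simp only [wedge2, w, Pi.add_apply, Pi.smul_apply, smul_eq_mul, cons_val_zero, cons_val_one]
    push_cast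
    linear_combination (by exact_mod_cast hab : (a : ℝ) * v 0 + b * v 1 = 1)
  have hw : w ≠ 0 := by
    rintro h; rw [h] at hwedge; simp [latticeVec, wedge2] at hwedge
  refine sq_dotProduct_self_le_of_reduced hwedge (hv.2 w hw) ?_
  rwa [latticeVec_add, latticeVec_smul, dotProduct_add, dotProduct_smul, smul_eq_mul]

end Lattice

theorem eucNorm2_eq_rpow (x : Fin 2 → ℝ) : eucNorm2 x = ((x ⬝ᵥ x) ^ 2) ^ ((1 : ℝ) / 4) := by
  have hx : 0 ≤ x ⬝ᵥ x := by simpa using dotProduct_self_star_nonneg x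
  have hsqrt : eucNorm2 x = √(x ⬝ᵥ x) := by simp [eucNorm2, dotProduct, Fin.sum_univ_two, sq]
  rw [hsqrt, Real.sqrt_eq_rpow, ← Real.rpow_natCast, ← Real.rpow_mul hx]
  norm_num

theorem rpow_one_div_four_pow_four {a : ℝ} (ha : 0 ≤ a) : (a ^ ((1 : ℝ) / 4)) ^ 4 = a := by
  rw [one_div]
  exact_mod_cast Real.rpow_inv_natCast_pow ha four_ne_zero

theorem exists_ne_zero_eucNorm2_le {Λ : Set (Fin 2 → ℝ)} (hΛ : IsUnimodularLattice 2 Λ) :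
    ∃ x ∈ Λ, x ≠ 0 ∧ eucNorm2 x ≤ (4 / 3 : ℝ) ^ ((1 : ℝ) / 4) := by
  obtain ⟨g, hg, rfl⟩ := hΛ
  obtain ⟨v, hv⟩ := exists_isMinimalVector g (by simp [hg])
  refine ⟨latticeVec g v, ⟨v, rfl⟩, latticeVec_ne_zero g (by simp [hg]) hv.1, ?_⟩
  rw [eucNorm2_eq_rpow, Real.rpow_le_rpow_iff (sq_nonneg _) (by norm_num) (by norm_num)]
  exact hv.sq_dotProduct_self_le g hg

/-- When `c ^ 4 = 4 / 3`, `c⁻¹ = c * √3 / 2`, so the columns `c • (1, 0)` and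
`c • (1 / 2, √3 / 2)` span a hexagonal lattice. -/
noncomputable def hexMatrix (c : ℝ) : Matrix (Fin 2) (Fin 2) ℝ := !![c, c / 2; 0, c⁻¹]

theorem det_hexMatrix {c : ℝ} (hc : c ≠ 0) : (hexMatrix c).det = 1 := by
  simp [hexMatrix, det_fin_two_of, hc]

theorem sq_dotProduct_self_latticeVec_hexMatrix {c : ℝ} (hc : c ^ 4 = 4 / 3) (v : Fin 2 → ℤ) :
    (latticeVec (hexMatrix c) v ⬝ᵥ latticeVec (hexMatrix c) v) ^ 2
      = 4 / 3 * ((v 0 : ℝ) ^ 2 + v 0 * v 1 + v 1 ^ 2) ^ 2 := by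
  have hc0 : c ≠ 0 := by rintro rfl; norm_num at hc
  simp only [dotProduct, latticeVec, mulVec, hexMatrix, of_apply, cons_val', cons_val_fin_one,
    Fin.sum_univ_two, cons_val_zero, cons_val_one, zero_mul, zero_add]
  field_simp
  rw [hc]
  ring

theorem exists_isUnimodularLattice_le_eucNorm2 :
    ∃ Λ : Set (Fin 2 → ℝ), IsUnimodularLattice 2 Λ ∧
      ∀ x ∈ Λ, x ≠ 0 → (4 / 3 : ℝ) ^ ((1 : ℝ) / 4) ≤ eucNorm2 x := by
  set c : ℝ := (4 / 3 : ℝ) ^ ((1 : ℝ) / 4)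
  have hc4 : c ^ 4 = 4 / 3 := rpow_one_div_four_pow_four (by norm_num)
  refine ⟨_, ⟨hexMatrix c, det_hexMatrix (by positivity), rfl⟩, ?_⟩
  rintro _ ⟨v, rfl⟩ hx
  have hv : v 0 ≠ 0 ∨ v 1 ≠ 0 := by
    by_contra! h
    exact hx (by rw [show v = 0 by ext i; fin_cases i; exacts [h.1, h.2]]; simp)
  have hform : (1 : ℝ) ≤ (v 0 : ℝ) ^ 2 + v 0 * v 1 + v 1 ^ 2 := by
    exact_mod_cast one_le_sq_add_mul_add_sq hv
  rw [← latticeVec, eucNorm2_eq_rpow,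
    Real.rpow_le_rpow_iff (by norm_num) (sq_nonneg _) (by norm_num),
    sq_dotProduct_self_latticeVec_hexMatrix hc4]
  nlinarith

/-- The critical radius of the Euclidean norm on ℝ² equals (4/3)^{1/4}:
every unimodular lattice contains a nonzero vector of Euclidean norm at most
(4/3)^{1/4}, the bound is attained by some unimodular lattice, and the
critical radius (a sup) equals (4/3)^{1/4}. -/
theorem stmt2 :
    (∀ Λ : Set (Fin 2 → ℝ), IsUnimodularLattice 2 Λ →
        ∃ x ∈ Λ, x ≠ 0 ∧ eucNorm2 x ≤ (4 / 3 : ℝ) ^ ((1 : ℝ) / 4)) ∧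
    (∃ Λ : Set (Fin 2 → ℝ), IsUnimodularLattice 2 Λ ∧
        ∀ x ∈ Λ, x ≠ 0 → (4 / 3 : ℝ) ^ ((1 : ℝ) / 4) ≤ eucNorm2 x) ∧
    sSup {r : ℝ | 0 < r ∧ ∃ Λ : Set (Fin 2 → ℝ), IsUnimodularLattice 2 Λ ∧
        ∀ x ∈ Λ, eucNorm2 x < r → x = 0} = (4 / 3 : ℝ) ^ ((1 : ℝ) / 4) := by
  refine ⟨fun Λ => exists_ne_zero_eucNorm2_le, exists_isUnimodularLattice_le_eucNorm2,
    IsGreatest.csSup_eq ⟨?_, ?_⟩⟩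
  · obtain ⟨Λ, hΛ, hmin⟩ := exists_isUnimodularLattice_le_eucNorm2
    exact ⟨by positivity, Λ, hΛ, fun x hx hlt => by_contra fun hx0 => (hmin x hx hx0).not_gt hlt⟩
  · rintro r ⟨-, Λ, hΛ, havoid⟩
    obtain ⟨x, hx, hx0, hle⟩ := exists_ne_zero_eucNorm2_le hΛ
    exact le_of_not_gt fun hlt => hx0 (havoid x hx (hle.trans_lt hlt))
end

section
/- Let ω = (α, β) be a weight vector with Σα_i = Σβ_j = 1, α_i, β_j > 0, and let a_s = diag(e^{sα_1},…,e^{sα_m}, e^{−sβ_1},…,e^{−sβ_n}). For c > 0 and an m×n matrix A, define Λ_A = u_A ℤ^{m+n} with u_A = [[I_m, A],[0, I_n]]. If there exist r < 1 and s_0 > 0 such that for all s > s_0 the lattice a_s Λ_A contains a nonzero vector of sup-norm less than r, then there exist c_1 < 1 such that for all sufficiently large t the system ‖Aq − p‖_α < c_1/t, ‖q‖_β < t has a solution (p,q) ∈ ℤ^m × (ℤ^n \ {0}). -/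
/-! Put `t = e^s`. A vector `(p + Aq, q)` of `Λ_A` made shorter than `r` by `a_s` satisfies
`|(Aq)_i + p_i| < r t^{-α_i}` and `|q_j| < r t^{β_j}`, which is the Dirichlet system for `(-p, q)`
with `c₁ = max r (1/2)`, because `α_i ≤ 1` gives `r ≤ c₁ ≤ c₁ ^ α_i`. Moreover `q ≠ 0`: for
`s ≥ 0` the expanding coordinates of a vector with `q = 0` are integers of absolute value `< 1`. -/

open Real

lemma Int.eq_zero_of_abs_exp_mul_lt_one {s a r : ℝ} {p : ℤ} (hs : 0 ≤ s) (ha : 0 ≤ a)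
    (hr : r ≤ 1) (h : |exp (s * a) * p| < r) : p = 0 := by
  have hexp : 1 ≤ exp (s * a) := one_le_exp (mul_nonneg hs ha)
  have hp : |(p : ℝ)| < 1 := by
    rw [abs_mul, abs_of_pos (exp_pos _)] at h
    nlinarith [abs_nonneg (p : ℝ)]
  exact_mod_cast Int.abs_lt_one_iff.mp (by exact_mod_cast hp)

lemma abs_lt_div_exp_rpow_of_abs_exp_mul_lt {x r c s a : ℝ} (hc0 : 0 < c) (hc1 : c ≤ 1)
    (hrc : r ≤ c) (ha : a ≤ 1) (h : |exp (s * a) * x| < r) : |x| < (c / exp s) ^ a := by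
  rw [abs_mul, abs_of_pos (exp_pos _), mul_comm, ← lt_div_iff₀ (exp_pos _)] at h
  calc |x| < r / exp (s * a) := h
    _ ≤ c ^ a / exp (s * a) := by gcongr; exact hrc.trans (self_le_rpow_of_le_one hc0.le hc1 ha)
    _ = (c / exp s) ^ a := by rw [div_rpow hc0.le (exp_pos s).le, ← exp_mul]

lemma abs_lt_exp_rpow_of_abs_exp_neg_mul_lt {x r s b : ℝ} (hr : r ≤ 1)
    (h : |exp (-(s * b)) * x| < r) : |x| < exp s ^ b := by
  rw [abs_mul, abs_of_pos (exp_pos _), exp_neg, inv_mul_lt_iff₀ (exp_pos _)] at h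
  rw [← exp_mul]
  nlinarith [exp_pos (s * b)]

theorem stmt4_general (m n : ℕ)
    (α : Fin m → ℝ) (β : Fin n → ℝ)
    (hα : ∀ i, 0 < α i)
    (hαs : ∑ i, α i = 1)
    (A : Matrix (Fin m) (Fin n) ℝ)
    (h : ∃ r : ℝ, r < 1 ∧ ∃ s₀ : ℝ, 0 < s₀ ∧ ∀ s > s₀,
      ∃ (p : Fin m → ℤ) (q : Fin n → ℤ), ¬(p = 0 ∧ q = 0) ∧
        (∀ i, |Real.exp (s * α i) * ((p i : ℝ) + ∑ j, A i j * (q j : ℝ))| < r) ∧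
        (∀ j, |Real.exp (-(s * β j)) * (q j : ℝ)| < r)) :
    ∃ c₁ : ℝ, 0 < c₁ ∧ c₁ < 1 ∧ ∃ t₀ : ℝ, ∀ t > t₀,
      ∃ (p : Fin m → ℤ) (q : Fin n → ℤ), q ≠ 0 ∧
        (∀ i, |(∑ j, A i j * (q j : ℝ)) - (p i : ℝ)| < (c₁ / t) ^ (α i)) ∧
        (∀ j, |(q j : ℝ)| < t ^ (β j)) := by
  obtain ⟨r, hr1, s₀, hs₀, H⟩ := h
  have hα1 : ∀ i, α i ≤ 1 := fun i =>
    hαs ▸ Finset.single_le_sum (fun j _ => (hα j).le) (Finset.mem_univ i)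
  have hc1 : max r (1 / 2) < 1 := max_lt hr1 (by norm_num)
  refine ⟨max r (1 / 2), by positivity, hc1, exp s₀, fun t ht => ?_⟩
  have ht0 : 0 < t := (exp_pos s₀).trans ht
  have hs : s₀ < log t := (lt_log_iff_exp_lt ht0).mpr ht
  obtain ⟨p, q, hpq, hp, hq⟩ := H (log t) hs
  have hq0 : q ≠ 0 := by
    rintro rfl
    refine hpq ⟨funext fun i => ?_, rfl⟩
    exact Int.eq_zero_of_abs_exp_mul_lt_one (hs₀.trans hs).le (hα i).le hr1.le
      (by simpa using hp i)
  rw [← exp_log ht0]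
  refine ⟨-p, q, hq0, fun i => ?_, fun j => abs_lt_exp_rpow_of_abs_exp_neg_mul_lt hr1.le (hq j)⟩
  simpa [add_comm] using abs_lt_div_exp_rpow_of_abs_exp_mul_lt (by positivity) hc1.le
    (le_max_left r (1 / 2)) (hα1 i) (hp i)

/-- Dani correspondence, dynamics ⟹ Diophantine: if for some r < 1 and all
large s the lattice a_s Λ_A contains a nonzero vector of sup-norm < r, then
A improves Dirichlet's theorem with some constant c₁ < 1. -/
theorem stmt4 (m n : ℕ) (hm : 0 < m) (hn : 0 < n)
    (α : Fin m → ℝ) (β : Fin n → ℝ)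
    (hα : ∀ i, 0 < α i) (hβ : ∀ j, 0 < β j)
    (hαs : ∑ i, α i = 1) (hβs : ∑ j, β j = 1)
    (A : Matrix (Fin m) (Fin n) ℝ)
    (h : ∃ r : ℝ, r < 1 ∧ ∃ s₀ : ℝ, 0 < s₀ ∧ ∀ s > s₀,
      ∃ (p : Fin m → ℤ) (q : Fin n → ℤ), ¬(p = 0 ∧ q = 0) ∧
        (∀ i, |Real.exp (s * α i) * ((p i : ℝ) + ∑ j, A i j * (q j : ℝ))| < r) ∧
        (∀ j, |Real.exp (-(s * β j)) * (q j : ℝ)| < r)) :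
    ∃ c₁ : ℝ, 0 < c₁ ∧ c₁ < 1 ∧ ∃ t₀ : ℝ, ∀ t > t₀,
      ∃ (p : Fin m → ℤ) (q : Fin n → ℤ), q ≠ 0 ∧
        (∀ i, |(∑ j, A i j * (q j : ℝ)) - (p i : ℝ)| < (c₁ / t) ^ (α i)) ∧
        (∀ j, |(q j : ℝ)| < t ^ (β j)) :=
  stmt4_general m n α β hα hαs A h
end

section
/- Let ω = (α, β) be a weight vector and a_s the corresponding one-parameter diagonal group. For an m×n matrix A and 0 < c < 1, if for all sufficiently large t the system ‖Aq − p‖_α < c/t, ‖q‖_β < t has a solution (p,q) ∈ ℤ^m × (ℤ^n \ {0}), then there exist r < 1 and s_0 > 0 such that for all s > s_0 the lattice a_s Λ_A = a_s u_A ℤ^{m+n} contains a nonzero vector of sup-norm strictly less than r. -/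
/-! With t = √c·eˢ, a solution (p, q) of the Diophantine system at scale t gives the lattice
vector a_s u_A (−p, q), whose coordinates are bounded by √c^{α_i} and √c^{β_j}: the factors
e^{sα_i} and e^{−sβ_j} turn c/t and t into √c. These finitely many bounds are all < 1, so
their maximum is the required r. -/

open Real

theorem exists_lt_one_forall_le {ι : Type*} [Finite ι] (f : ι → ℝ) (hf : ∀ i, f i < 1) :
    ∃ r < 1, ∀ i, f i ≤ r := by
  have : Nonempty (Set.Iio (1 : ℝ)) := ⟨⟨0, Set.mem_Iio.2 one_pos⟩⟩
  obtain ⟨r, hr⟩ := Finite.exists_le fun i => (⟨f i, hf i⟩ : Set.Iio (1 : ℝ))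
  exact ⟨r, r.2, fun i => hr i⟩

theorem exists_pos_forall_lt_mul_exp {k : ℝ} (hk : 0 < k) (T : ℝ) :
    ∃ s₀ > 0, ∀ s > s₀, T < k * exp s := by
  obtain ⟨a, ha⟩ := Filter.eventually_atTop.1
    ((tendsto_exp_atTop.const_mul_atTop hk).eventually_gt_atTop T)
  exact ⟨max a 1, by positivity, fun s hs => ha s (le_of_max_le_left hs.le)⟩

theorem abs_exp_mul_lt_mul_rpow {s a x y : ℝ} (hy : 0 ≤ y) (hx : |x| < y ^ a) :
    |exp (s * a) * x| < (exp s * y) ^ a := by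
  rw [abs_mul, abs_of_pos (exp_pos _), mul_rpow (exp_pos s).le hy, exp_mul]
  exact mul_lt_mul_of_pos_left hx (by positivity)

theorem exp_mul_div_sqrt_mul_exp {c : ℝ} (hc : 0 < c) (s : ℝ) :
    exp s * (c / (√c * exp s)) = √c := by
  have : 0 < √c := sqrt_pos.2 hc
  field_simp
  rw [sq_sqrt hc.le]

theorem exp_neg_mul_sqrt_mul_exp (c s : ℝ) : exp (-s) * (√c * exp s) = √c := by
  rw [exp_neg]
  field_simp

theorem sqrt_rpow_lt_one {c a : ℝ} (hc1 : c < 1) (ha : 0 < a) : √c ^ a < 1 :=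
  rpow_lt_one (sqrt_nonneg c) ((sqrt_lt' one_pos).2 (by simpa using hc1)) ha

theorem stmt5_general (m n : ℕ)
    (α : Fin m → ℝ) (β : Fin n → ℝ)
    (hα : ∀ i, 0 < α i) (hβ : ∀ j, 0 < β j)
    (A : Matrix (Fin m) (Fin n) ℝ)
    (c : ℝ) (hc0 : 0 < c) (hc1 : c < 1)
    (h : ∃ t₀ : ℝ, ∀ t > t₀,
      ∃ (p : Fin m → ℤ) (q : Fin n → ℤ), q ≠ 0 ∧
        (∀ i, |(∑ j, A i j * (q j : ℝ)) - (p i : ℝ)| < (c / t) ^ (α i)) ∧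
        (∀ j, |(q j : ℝ)| < t ^ (β j))) :
    ∃ r : ℝ, r < 1 ∧ ∃ s₀ : ℝ, 0 < s₀ ∧ ∀ s > s₀,
      ∃ (p : Fin m → ℤ) (q : Fin n → ℤ), ¬(p = 0 ∧ q = 0) ∧
        (∀ i, |Real.exp (s * α i) * ((p i : ℝ) + ∑ j, A i j * (q j : ℝ))| < r) ∧
        (∀ j, |Real.exp (-(s * β j)) * (q j : ℝ)| < r) := by
  obtain ⟨t₀, hsol⟩ := h
  obtain ⟨r, hr1, hr⟩ := exists_lt_one_forall_le
    (Sum.elim (fun i => √c ^ α i) (fun j => √c ^ β j))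
    (Sum.rec (fun i => sqrt_rpow_lt_one hc1 (hα i)) (fun j => sqrt_rpow_lt_one hc1 (hβ j)))
  obtain ⟨s₀, hs₀, hlarge⟩ := exists_pos_forall_lt_mul_exp (sqrt_pos.2 hc0) t₀
  refine ⟨r, hr1, s₀, hs₀, fun s hs => ?_⟩
  obtain ⟨p, q, hq, hp, hqt⟩ := hsol _ (hlarge s hs)
  refine ⟨-p, q, fun h => hq h.2, fun i => ?_, fun j => ?_⟩
  · have hi := abs_exp_mul_lt_mul_rpow (s := s) (by positivity) (hp i)
    rw [exp_mul_div_sqrt_mul_exp hc0] at hi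
    rw [Pi.neg_apply, Int.cast_neg, neg_add_eq_sub]
    exact hi.trans_le (hr (.inl i))
  · have hj := abs_exp_mul_lt_mul_rpow (s := -s) (by positivity) (hqt j)
    rw [exp_neg_mul_sqrt_mul_exp, neg_mul] at hj
    exact hj.trans_le (hr (.inr j))

/-- Dani correspondence, Diophantine ⟹ dynamics: if for some 0 < c < 1 the
system ‖Aq − p‖_α < c/t, ‖q‖_β < t is solvable for all large t, then for some
r < 1 and all large s the lattice a_s Λ_A contains a nonzero vector of
sup-norm strictly less than r. -/
theorem stmt5 (m n : ℕ) (hm : 0 < m) (hn : 0 < n)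
    (α : Fin m → ℝ) (β : Fin n → ℝ)
    (hα : ∀ i, 0 < α i) (hβ : ∀ j, 0 < β j)
    (hαs : ∑ i, α i = 1) (hβs : ∑ j, β j = 1)
    (A : Matrix (Fin m) (Fin n) ℝ)
    (c : ℝ) (hc0 : 0 < c) (hc1 : c < 1)
    (h : ∃ t₀ : ℝ, ∀ t > t₀,
      ∃ (p : Fin m → ℤ) (q : Fin n → ℤ), q ≠ 0 ∧
        (∀ i, |(∑ j, A i j * (q j : ℝ)) - (p i : ℝ)| < (c / t) ^ (α i)) ∧
        (∀ j, |(q j : ℝ)| < t ^ (β j))) :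
    ∃ r : ℝ, r < 1 ∧ ∃ s₀ : ℝ, 0 < s₀ ∧ ∀ s > s₀,
      ∃ (p : Fin m → ℤ) (q : Fin n → ℤ), ¬(p = 0 ∧ q = 0) ∧
        (∀ i, |Real.exp (s * α i) * ((p i : ℝ) + ∑ j, A i j * (q j : ℝ))| < r) ∧
        (∀ j, |Real.exp (-(s * β j)) * (q j : ℝ)| < r) :=
  stmt5_general m n α β hα hβ A c hc0 hc1 h
end
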